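/- Let Γ be a connected negative definite plumbing tree, and let B ⊆ V(Γ) be a set of bad vertices (i.e., replacing the decorations e_v for v ∈ B by sufficiently negative integers yields a rational graph). If Γ' is a connected full subgraph of Γ, then B' := B ∩ V(Γ') is a set of bad vertices for Γ'. In particular m(Γ') ≤ m(Γ), where m denotes the minimal cardinality of a set of bad vertices. -/

import Mathlib

open Matrix BigOperators

/-- Intersection matrix of a graph with adjacency relation `A` and integer decorations `e`. -/
def imatZ {V : Type} [Fintype V] [DecidableEq V] (A : V → V → Prop) [DecidableRel A]
    (e : V → ℤ) : Matrix V V ℤ :=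
  fun v w => if v = w then e v else if A v w then 1 else 0

/-- Negative definiteness of an integer matrix (as a quadratic form over ℚ). -/
def NegDefZ {V : Type} [Fintype V] (M : Matrix V V ℤ) : Prop :=
  ∀ x : V → ℚ, x ≠ 0 → ∑ v, ∑ w, x v * (M v w : ℚ) * x w < 0

/-- The pairing `(Z, E_v)` of a cycle `Z` with the base element `E_v`. -/
def pairZ {V : Type} [Fintype V] (M : Matrix V V ℤ) (Z : V → ℤ) (v : V) : ℤ :=
  ∑ w, M v w * Z w

/-- `Z` is Artin's minimal (fundamental) cycle: effective, nonzero, `(Z,E_v) ≤ 0` for all `v`,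
and componentwise minimal among all such cycles. -/
def IsZmin {V : Type} [Fintype V] (M : Matrix V V ℤ) (Z : V → ℤ) : Prop :=
  (∀ v, 0 ≤ Z v) ∧ Z ≠ 0 ∧ (∀ v, pairZ M Z v ≤ 0) ∧
    ∀ Z' : V → ℤ, ((∀ v, 0 ≤ Z' v) ∧ Z' ≠ 0 ∧ (∀ v, pairZ M Z' v ≤ 0)) → ∀ v, Z v ≤ Z' v

/-- `K` is the canonical cycle: `(K + E_v, E_v) + 2 = 0` for all `v`. -/
def IsCanonical {V : Type} [Fintype V] (M : Matrix V V ℤ) (K : V → ℚ) : Prop :=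
  ∀ v, (∑ w, (M v w : ℚ) * K w) = -2 - (M v v : ℚ)

/-- The Riemann--Roch expression `χ(l) = -(K + l, l)/2`. -/
def chi {V : Type} [Fintype V] (M : Matrix V V ℤ) (K : V → ℚ) (l : V → ℚ) : ℚ :=
  -(∑ v, ∑ w, (K v + l v) * (M v w : ℚ) * l w) / 2

/-- Artin's rationality criterion: `χ(Z_min) ≥ 1`. -/
def IsRationalGraph {V : Type} [Fintype V] (M : Matrix V V ℤ) : Prop :=
  ∀ (Z : V → ℤ) (K : V → ℚ), IsZmin M Z → IsCanonical M K →
    1 ≤ chi M K (fun v => (Z v : ℚ))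

/-- `B` is a set of bad vertices: replacing the decorations at `B` by any sufficiently
negative integers yields a rational graph. -/
def IsBadSet {V : Type} [Fintype V] [DecidableEq V] (A : V → V → Prop) [DecidableRel A]
    (e : V → ℤ) (B : Finset V) : Prop :=
  ∃ N : ℤ, ∀ e' : V → ℤ, (∀ v ∈ B, e' v ≤ N) → (∀ v ∉ B, e' v = e v) →
    IsRationalGraph (imatZ A e')

/-- `m(Γ)`: the minimal cardinality of a set of bad vertices. -/
noncomputable def mBad {V : Type} [Fintype V] [DecidableEq V] (A : V → V → Prop)
    [DecidableRel A] (e : V → ℤ) : ℕ :=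
  sInf {n : ℕ | ∃ B : Finset V, IsBadSet A e B ∧ B.card = n}

/-!
Lowering the decorations of `B` outside `S` as well makes `Γ` itself rational, so it suffices that
a full subgraph of a rational graph is rational. Extended by zero, `Z_min` of the subgraph is a
nonzero cycle below `Z_min(Γ)`; Laufer's algorithm climbs from it to `Z_min(Γ)` without increasing
`χ`, whence `χ ≥ χ(Z_min(Γ)) ≥ 1`. On the connected negative definite `Γ` both `Z_min(Γ)` and `K`
exist, so rationality of `Γ` does give `χ(Z_min(Γ)) ≥ 1`.
-/

section CycleLattice

variable {V : Type} [Fintype V]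

def IsAntinefCycle (M : Matrix V V ℤ) (Z : V → ℤ) : Prop :=
  (∀ v, 0 ≤ Z v) ∧ Z ≠ 0 ∧ ∀ v, pairZ M Z v ≤ 0

lemma pairZ_le_pairZ_of_le_of_eq {M : Matrix V V ℤ} (hoff : ∀ v w, v ≠ w → 0 ≤ M v w)
    {x y : V → ℤ} (hxy : x ≤ y) {u : V} (hu : x u = y u) : pairZ M x u ≤ pairZ M y u := by
  refine Finset.sum_le_sum fun w _ => ?_
  rcases eq_or_ne u w with rfl | h
  · rw [hu]
  · exact mul_le_mul_of_nonneg_left (hxy w) (hoff u w h)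

/-- `2χ(l)`, written without `K` by means of `(K, E_v) = -2 - e_v`. -/
def twoChi (M : Matrix V V ℤ) (l : V → ℤ) : ℤ :=
  l ⬝ᵥ (fun v => 2 + M v v) - l ⬝ᵥ (M *ᵥ l)

lemma twoChi_add_single [DecidableEq V] {M : Matrix V V ℤ} (hM : M.IsSymm) (l : V → ℤ) (u : V) :
    twoChi M (l + Pi.single u 1) = twoChi M l + 2 - 2 * pairZ M l u := by
  have hcol : l ⬝ᵥ M.col u = pairZ M l u := by
    simp only [pairZ, dotProduct, col_apply, hM.apply u, mul_comm]
  have hrow : Pi.single u 1 ⬝ᵥ (M *ᵥ l) = pairZ M l u := by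
    rw [single_dotProduct, one_mul]; rfl
  simp only [twoChi, add_dotProduct, mulVec_add, dotProduct_add, hcol, hrow, single_dotProduct,
    mulVec_single_one, col_apply, one_mul]
  ring

lemma chi_eq_twoChi_div_two {M : Matrix V V ℤ} (hM : M.IsSymm) {K : V → ℚ}
    (hK : IsCanonical M K) (l : V → ℤ) :
    chi M K (fun v => (l v : ℚ)) = twoChi M l / 2 := by
  have hKl : ∑ v, ∑ w, K v * (M v w : ℚ) * l w = -∑ w, (l w : ℚ) * (2 + M w w) := by
    rw [Finset.sum_comm, ← Finset.sum_neg_distrib]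
    refine Finset.sum_congr rfl fun w _ => ?_
    calc ∑ v, K v * (M v w : ℚ) * l w = l w * ∑ v, (M w v : ℚ) * K v := by
          rw [Finset.mul_sum]
          exact Finset.sum_congr rfl fun v _ => by rw [hM.apply w v]; ring
      _ = -(l w * (2 + M w w)) := by rw [hK w]; ring
  simp only [chi, twoChi, dotProduct, mulVec, add_mul, Finset.sum_add_distrib, hKl]
  push_cast
  simp only [Finset.mul_sum, mul_assoc]
  ring

end CycleLattice

section NegativeDefinite

variable {V : Type} [Fintype V] {M : Matrix V V ℤ}

lemma NegDefZ.dotProduct_map_mulVec_neg (hM : NegDefZ M) {x : V → ℚ} (hx : x ≠ 0) :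
    x ⬝ᵥ (M.map (Int.cast : ℤ → ℚ) *ᵥ x) < 0 := by
  convert hM x hx using 1
  simp only [dotProduct, mulVec, map_apply, Finset.mul_sum, mul_assoc]

lemma NegDefZ.dotProduct_mulVec_neg (hM : NegDefZ M) {x : V → ℤ} (hx : x ≠ 0) :
    x ⬝ᵥ (M *ᵥ x) < 0 := by
  have hcast : (fun v => (x v : ℚ)) ≠ 0 := fun h => hx (funext fun v => by simpa using congrFun h v)
  have hform : x ⬝ᵥ (M *ᵥ x) = ∑ v, ∑ w, x v * M v w * x w := by
    simp only [dotProduct, mulVec, Finset.mul_sum, mul_assoc]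
  rw [hform]
  exact_mod_cast hM _ hcast

lemma NegDefZ.det_map_ne_zero [DecidableEq V] (hM : NegDefZ M) :
    (M.map (Int.cast : ℤ → ℚ)).det ≠ 0 := by
  intro h
  obtain ⟨x, hx, hMx⟩ := exists_mulVec_eq_zero_iff.2 h
  simpa [hMx] using hM.dotProduct_map_mulVec_neg hx

lemma NegDefZ.exists_isCanonical [DecidableEq V] (hM : NegDefZ M) : ∃ K, IsCanonical M K := by
  set Mq := M.map (Int.cast : ℤ → ℚ)
  set t : V → ℚ := fun v => -2 - M v v
  have hsolve : Mq *ᵥ (Mq⁻¹ *ᵥ t) = t := by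
    rw [mulVec_mulVec, mul_nonsing_inv _ (isUnit_iff_ne_zero.2 hM.det_map_ne_zero), one_mulVec]
  exact ⟨Mq⁻¹ *ᵥ t, fun v => congrFun hsolve v⟩

end NegativeDefinite

section AntinefCycles

variable {V : Type} [Fintype V] {M : Matrix V V ℤ}

lemma NegDefZ.nonneg_of_pairZ_nonpos (hM : NegDefZ M) (hoff : ∀ v w, v ≠ w → 0 ≤ M v w)
    {y : V → ℤ} (hy : ∀ v, pairZ M y v ≤ 0) : 0 ≤ y := by
  have hcross : 0 ≤ y⁻ ⬝ᵥ (M *ᵥ y⁺) := by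
    refine Finset.sum_nonneg fun v _ => ?_
    rw [mulVec, dotProduct, Finset.mul_sum]
    refine Finset.sum_nonneg fun w _ => ?_
    rcases eq_or_ne v w with rfl | hvw
    · rcases le_total 0 (y v) with h | h <;> simp [h]
    · exact mul_nonneg (negPart_nonneg _) (mul_nonneg (hoff v w hvw) (posPart_nonneg _))
  have hpair : y⁻ ⬝ᵥ (M *ᵥ y) ≤ 0 :=
    Finset.sum_nonpos fun v _ => mul_nonpos_of_nonneg_of_nonpos (negPart_nonneg _) (hy v)
  -- `(y⁻, y⁻) = (y⁻, y⁺) - (y⁻, y) ≥ 0`, so `y⁻ = 0`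
  have hneg : y⁻ = 0 := by
    by_contra h
    have hsplit : y⁻ ⬝ᵥ (M *ᵥ y) = y⁻ ⬝ᵥ (M *ᵥ y⁺) - y⁻ ⬝ᵥ (M *ᵥ y⁻) := by
      rw [← dotProduct_sub, ← mulVec_sub, posPart_sub_negPart]
    linarith [hM.dotProduct_mulVec_neg h]
  exact negPart_eq_zero.1 hneg

lemma NegDefZ.exists_isAntinefCycle [DecidableEq V] [Nonempty V] (hM : NegDefZ M)
    (hoff : ∀ v w, v ≠ w → 0 ≤ M v w) : ∃ Y, IsAntinefCycle M Y := by
  have hdet : M.det ≠ 0 := fun h => hM.det_map_ne_zero <| by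
    simpa [h] using (RingHom.map_det (Int.castRingHom ℚ) M).symm
  -- `M * adj M = det M • 1`, so `M Y = -(det M)² 𝟙`
  set Y := M.adjugate *ᵥ fun _ => -M.det
  have hMY : ∀ v, pairZ M Y v = -M.det ^ 2 := fun v => by
    change (M *ᵥ Y) v = _
    rw [mulVec_mulVec, mul_adjugate, smul_mulVec, one_mulVec]
    simp [sq]
  have hY : ∀ v, pairZ M Y v ≤ 0 := fun v => by rw [hMY]; exact neg_nonpos.2 (sq_nonneg _)
  refine ⟨Y, hM.nonneg_of_pairZ_nonpos hoff hY, fun h0 => ?_, hY⟩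
  obtain ⟨v⟩ := ‹Nonempty V›
  have := hMY v
  simp [h0, pairZ, hdet] at this

lemma exists_isZmin {M : Matrix V V ℤ} (hoff : ∀ v w, v ≠ w → 0 ≤ M v w)
    (hpos : ∀ Z, IsAntinefCycle M Z → ∀ v, 0 < Z v) {Y : V → ℤ} (hY : IsAntinefCycle M Y) :
    ∃ Z, IsZmin M Z := by
  have hleast : ∀ v, ∃ m, (∃ x, IsAntinefCycle M x ∧ x v = m) ∧
      ∀ k, (∃ x, IsAntinefCycle M x ∧ x v = k) → m ≤ k := fun v =>
    Int.exists_least_of_bdd ⟨0, by rintro _ ⟨x, hx, rfl⟩; exact hx.1 v⟩ ⟨Y v, Y, hY, rfl⟩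
  choose Z hZ hZle using hleast
  choose x hx hxZ using hZ
  have hle : ∀ y, IsAntinefCycle M y → Z ≤ y := fun y hy v => hZle v _ ⟨y, hy, rfl⟩
  have hZpos : ∀ v, 0 < Z v := fun v => hxZ v ▸ hpos _ (hx v) v
  obtain ⟨u, -⟩ := Function.ne_iff.1 hY.2.1
  refine ⟨Z, fun v => (hZpos v).le, fun h => (hZpos u).ne' (congrFun h u), fun v => ?_, hle⟩
  exact (pairZ_le_pairZ_of_le_of_eq hoff (hle _ (hx v)) (hxZ v).symm).trans ((hx v).2.2 v)

end AntinefCycles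

section Laufer

variable {V : Type} [Fintype V] [DecidableEq V] {M : Matrix V V ℤ}

-- Laufer's algorithm: while `d` is not anti-nef at some `u`, replacing `d` by `d + E_u` does not
-- increase `2χ` and stays below `Z_min`; it ends at an anti-nef cycle, which can only be `Z_min`.
theorem two_le_twoChi_of_le_isZmin (hM : M.IsSymm) (hoff : ∀ v w, v ≠ w → 0 ≤ M v w)
    {Z : V → ℤ} (hZ : IsZmin M Z) (hZχ : 2 ≤ twoChi M Z)
    (d : V → ℤ) (hd0 : 0 ≤ d) (hdZ : d ≤ Z) (hd : d ≠ 0) : 2 ≤ twoChi M d := by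
  by_cases hanti : ∀ v, pairZ M d v ≤ 0
  · rwa [le_antisymm hdZ (hZ.2.2.2 d ⟨hd0, hd, hanti⟩)]
  obtain ⟨u, hu⟩ := not_forall.1 hanti
  have hlt : d u < Z u := (hdZ u).lt_of_ne fun h =>
    hu ((pairZ_le_pairZ_of_le_of_eq hoff hdZ h).trans (hZ.2.2.1 u))
  have hsingle : ∀ v, (d + Pi.single u 1 : V → ℤ) v = d v + if v = u then 1 else 0 := fun v => by
    simp [Pi.single_apply]
  have hle : (d + Pi.single u 1 : V → ℤ) ≤ Z := fun v => by
    rw [hsingle]; split_ifs with h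
    · subst h; exact hlt
    · simpa using hdZ v
  have hnext := two_le_twoChi_of_le_isZmin hM hoff hZ hZχ (d + Pi.single u 1)
    (fun v => by rw [hsingle]; split_ifs <;> linarith [hd0 v]) hle
    (fun h => by have := congrFun h u; rw [hsingle, if_pos rfl] at this; linarith [hd0 u])
  rw [twoChi_add_single hM] at hnext
  omega
termination_by (∑ v, (Z v - d v)).toNat
decreasing_by
  have hgap : 0 ≤ ∑ v, (Z v - (d + Pi.single u 1 : V → ℤ) v) :=
    Finset.sum_nonneg fun v _ => sub_nonneg.2 (hle v)
  simp only [Pi.add_apply, sub_add_eq_sub_sub, Finset.sum_sub_distrib, Finset.sum_pi_single',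
    Finset.mem_univ, if_true] at hgap ⊢
  omega

end Laufer

lemma Function.Injective.extend_le {α β γ : Type*} [LE γ] {f : α → β} (hf : f.Injective)
    {g : α → γ} {e y : β → γ} (hg : g ≤ y ∘ f) (he : e ≤ y) : Function.extend f g e ≤ y :=
  fun b => by
    by_cases hb : ∃ a, f a = b
    · obtain ⟨a, rfl⟩ := hb
      rw [hf.extend_apply]
      exact hg a
    · rw [Function.extend_apply' _ _ _ hb]
      exact he b

section Submatrix

variable {V W : Type} [Fintype V] [Fintype W] {f : W → V}

lemma pairZ_extend_apply (M : Matrix V V ℤ) (hf : f.Injective) (z : W → ℤ) (a : W) :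
    pairZ M (Function.extend f z 0) (f a) = pairZ (M.submatrix f f) z a := by
  refine (Fintype.sum_of_injective f hf _ _ (fun v hv => ?_) fun b => ?_).symm
  · rw [Function.extend_apply' _ _ _ hv, Pi.zero_apply, mul_zero]
  · rw [hf.extend_apply, submatrix_apply]

lemma extend_dotProduct (hf : f.Injective) (z : W → ℤ) (y : V → ℤ) :
    Function.extend f z 0 ⬝ᵥ y = z ⬝ᵥ (y ∘ f) := by
  refine (Fintype.sum_of_injective f hf _ _ (fun v hv => ?_) fun b => ?_).symm
  · rw [Function.extend_apply' _ _ _ hv, Pi.zero_apply, zero_mul]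
  · rw [hf.extend_apply, Function.comp_apply]

lemma twoChi_extend (M : Matrix V V ℤ) (hf : f.Injective) (z : W → ℤ) :
    twoChi M (Function.extend f z 0) = twoChi (M.submatrix f f) z := by
  have hM : (M *ᵥ Function.extend f z 0) ∘ f = M.submatrix f f *ᵥ z :=
    funext (pairZ_extend_apply M hf z)
  simp only [twoChi, extend_dotProduct hf, hM]
  rfl

variable [DecidableEq V] {M : Matrix V V ℤ}

theorem isRationalGraph_submatrix_of_isZmin (hM : M.IsSymm) (hoff : ∀ v w, v ≠ w → 0 ≤ M v w)
    {Z : V → ℤ} (hZ : IsZmin M Z) (hZpos : ∀ v, 0 < Z v) (hZχ : 2 ≤ twoChi M Z)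
    (hf : f.Injective) : IsRationalGraph (M.submatrix f f) := by
  intro Z' K hZ' hK
  obtain ⟨a, ha⟩ := Function.ne_iff.1 hZ'.2.1
  have hZf : IsAntinefCycle (M.submatrix f f) (Z ∘ f) := by
    refine ⟨fun b => (hZpos _).le, fun h => (hZpos (f a)).ne' (congrFun h a), fun b => ?_⟩
    rw [← pairZ_extend_apply M hf]
    refine (pairZ_le_pairZ_of_le_of_eq hoff ?_ (hf.extend_apply _ _ _)).trans (hZ.2.2.1 _)
    exact hf.extend_le le_rfl fun v => (hZpos v).le
  have hd0 : 0 ≤ Function.extend f Z' 0 := Function.extend_nonneg hZ'.1 le_rfl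
  have hdZ : Function.extend f Z' 0 ≤ Z :=
    hf.extend_le (hZ'.2.2.2 _ hZf) fun v => (hZpos v).le
  have hd : Function.extend f Z' 0 ≠ 0 := fun h => ha (by simpa [hf.extend_apply] using congrFun h (f a))
  have h2 := two_le_twoChi_of_le_isZmin hM hoff hZ hZχ _ hd0 hdZ hd
  rw [twoChi_extend M hf] at h2
  rw [chi_eq_twoChi_div_two (hM.submatrix f) hK]
  have : (2 : ℚ) ≤ twoChi (M.submatrix f f) Z' := by exact_mod_cast h2
  linarith

end Submatrix

section Rationality

variable {V W : Type} [Fintype V] [DecidableEq V] [Fintype W] {M : Matrix V V ℤ}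

lemma IsRationalGraph.two_le_twoChi (hrat : IsRationalGraph M) (hM : M.IsSymm)
    (hneg : NegDefZ M) {Z : V → ℤ} (hZ : IsZmin M Z) : 2 ≤ twoChi M Z := by
  obtain ⟨K, hK⟩ := hneg.exists_isCanonical
  have h := hrat Z K hZ hK
  rw [chi_eq_twoChi_div_two hM hK] at h
  have h2 : (2 : ℚ) ≤ twoChi M Z := by linarith
  exact_mod_cast h2

theorem IsRationalGraph.submatrix (hrat : IsRationalGraph M) (hM : M.IsSymm)
    (hoff : ∀ v w, v ≠ w → 0 ≤ M v w) (hneg : NegDefZ M)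
    (hpos : ∀ Z, IsAntinefCycle M Z → ∀ v, 0 < Z v) {f : W → V} (hf : f.Injective) :
    IsRationalGraph (M.submatrix f f) := by
  intro Z' K hZ' hK
  obtain ⟨a, -⟩ := Function.ne_iff.1 hZ'.2.1
  have : Nonempty V := ⟨f a⟩
  obtain ⟨Y, hY⟩ := hneg.exists_isAntinefCycle hoff
  obtain ⟨Z, hZ⟩ := exists_isZmin hoff hpos hY
  exact isRationalGraph_submatrix_of_isZmin hM hoff hZ (hpos Z ⟨hZ.1, hZ.2.1, hZ.2.2.1⟩)
    (hrat.two_le_twoChi hM hneg hZ) hf Z' K hZ' hK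

end Rationality

section PlumbingGraph

variable {V : Type} [Fintype V] [DecidableEq V]

lemma imatZ_isSymm (G : SimpleGraph V) [DecidableRel G.Adj] (e : V → ℤ) :
    (imatZ G.Adj e).IsSymm :=
  IsSymm.ext fun v w => by
    by_cases h : v = w
    · subst h; rfl
    · simp [imatZ, h, Ne.symm h, G.adj_comm]

lemma imatZ_nonneg_of_ne (A : V → V → Prop) [DecidableRel A] (e : V → ℤ) {v w : V}
    (h : v ≠ w) : 0 ≤ imatZ A e v w := by
  simp only [imatZ, if_neg h]
  split_ifs <;> norm_num

lemma NegDefZ.imatZ_of_le {A : V → V → Prop} [DecidableRel A] {e e' : V → ℤ}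
    (hneg : NegDefZ (imatZ A e)) (hle : e' ≤ e) : NegDefZ (imatZ A e') := by
  intro x hx
  have hentry : ∀ v w, (imatZ A e' v w : ℚ) =
      imatZ A e v w + if v = w then ((e' v - e v : ℤ) : ℚ) else 0 := fun v w => by
    by_cases h : v = w <;> simp [imatZ, h]
  calc ∑ v, ∑ w, x v * (imatZ A e' v w : ℚ) * x w
      = ∑ v, ∑ w, x v * (imatZ A e v w : ℚ) * x w + ∑ v, ((e' v - e v : ℤ) : ℚ) * x v ^ 2 := by
        simp only [hentry, mul_add, add_mul, Finset.sum_add_distrib, mul_ite, ite_mul, mul_zero,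
          zero_mul, Finset.sum_ite_eq, Finset.mem_univ, if_true]
        congr 1
        exact Finset.sum_congr rfl fun v _ => by ring
    _ < 0 := add_neg_of_neg_of_nonpos (hneg x hx) <| Finset.sum_nonpos fun v _ =>
        mul_nonpos_of_nonpos_of_nonneg (by exact_mod_cast sub_nonpos.2 (hle v)) (sq_nonneg _)

lemma IsAntinefCycle.pos_of_preconnected {G : SimpleGraph V} [DecidableRel G.Adj] {e : V → ℤ}
    (hG : G.Preconnected) {Z : V → ℤ} (hZ : IsAntinefCycle (imatZ G.Adj e) Z) (v : V) :
    0 < Z v := by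
  -- a zero of `Z` next to a positive entry would make `(Z, E_b) > 0`
  have hstep : ∀ a b, G.Adj a b → 0 < Z a → 0 < Z b := by
    intro a b hab ha
    refine (hZ.1 b).lt_of_ne fun hb => absurd (hZ.2.2 b) (not_le.2 ?_)
    have hterm : imatZ G.Adj e b a * Z a = Z a := by simp [imatZ, hab.ne.symm, hab.symm]
    refine ha.trans_le (hterm ▸ Finset.single_le_sum (f := fun w => imatZ G.Adj e b w * Z w)
      (fun w _ => ?_) (Finset.mem_univ a))
    rcases eq_or_ne b w with rfl | h
    · simp [← hb]
    · exact mul_nonneg (imatZ_nonneg_of_ne _ _ h) (hZ.1 w)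
  have hwalk : ∀ {a b} (p : G.Walk a b), 0 < Z a → 0 < Z b := by
    intro a b p
    induction p with
    | nil => exact id
    | cons h _ ih => exact fun ha => ih (hstep _ _ h ha)
  obtain ⟨u, hu⟩ := Function.ne_iff.1 hZ.2.1
  obtain ⟨p⟩ := hG u v
  exact hwalk p ((hZ.1 u).lt_of_ne' hu)

lemma imatZ_subtype (G : SimpleGraph V) [DecidableRel G.Adj] (e : V → ℤ) (S : Finset V) :
    imatZ (fun a b : S => G.Adj a b) (fun a => e a) =
      (imatZ G.Adj e).submatrix Subtype.val Subtype.val := by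
  ext a b
  simp only [imatZ, submatrix_apply, Subtype.val_inj]

variable {G : SimpleGraph V} [DecidableRel G.Adj] {e : V → ℤ}

theorem IsRationalGraph.imatZ_subtype (hrat : IsRationalGraph (imatZ G.Adj e))
    (hG : G.Preconnected) (hneg : NegDefZ (imatZ G.Adj e)) (S : Finset V) :
    IsRationalGraph (imatZ (fun a b : S => G.Adj a b) (fun a => e a)) := by
  rw [_root_.imatZ_subtype]
  exact hrat.submatrix (imatZ_isSymm G e) (fun v w => imatZ_nonneg_of_ne _ _) hneg
    (fun Z hZ => hZ.pos_of_preconnected hG) Subtype.val_injective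

theorem IsBadSet.subtype {B : Finset V} (hB : IsBadSet G.Adj e B) (hG : G.Preconnected)
    (hneg : NegDefZ (imatZ G.Adj e)) (S : Finset V) :
    IsBadSet (fun a b : S => G.Adj a b) (fun a => e a) (B.subtype (· ∈ S)) := by
  obtain ⟨N, hN⟩ := hB
  obtain ⟨c, hc⟩ := (Set.finite_range e).bddBelow
  refine ⟨min N c, fun e'' hlow hkeep => ?_⟩
  have hlow' : ∀ v (h : v ∈ S), v ∈ B → e'' ⟨v, h⟩ ≤ min N c :=
    fun v h hv => hlow _ (Finset.mem_subtype.2 hv)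
  have hkeep' : ∀ v (h : v ∈ S), v ∉ B → e'' ⟨v, h⟩ = e v :=
    fun v h hv => hkeep _ (mt Finset.mem_subtype.1 hv)
  let e' : V → ℤ := fun v => if h : v ∈ S then e'' ⟨v, h⟩ else if v ∈ B then min N (e v) else e v
  have hle : e' ≤ e := fun v => by
    by_cases hS : v ∈ S
    · simp only [e', dif_pos hS]
      by_cases hBv : v ∈ B
      · exact (hlow' v hS hBv).trans ((min_le_right _ _).trans (hc ⟨v, rfl⟩))
      · exact (hkeep' v hS hBv).le
    · simp only [e', dif_neg hS]
      split_ifs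
      · exact min_le_right _ _
      · exact le_rfl
  have hrat : IsRationalGraph (imatZ G.Adj e') := hN e'
    (fun v hBv => by
      simp only [e']
      split_ifs with hS
      · exact (hlow' v hS hBv).trans (min_le_left _ _)
      · exact min_le_left _ _)
    (fun v hBv => by
      simp only [e']
      split_ifs with hS
      · exact hkeep' v hS hBv
      · rfl)
  have hrestrict : (fun a : S => e' a) = e'' := funext fun a => dif_pos a.2
  simpa only [hrestrict] using hrat.imatZ_subtype hG (hneg.imatZ_of_le hle) S

end PlumbingGraph

lemma mBad_le_of_forall_isBadSet {V V' : Type} [Fintype V] [DecidableEq V] [Fintype V']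
    [DecidableEq V'] {A : V → V → Prop} [DecidableRel A] {A' : V' → V' → Prop} [DecidableRel A']
    {e : V → ℤ} {e' : V' → ℤ} (hex : ∃ B, IsBadSet A e B)
    (h : ∀ B, IsBadSet A e B → ∃ B', IsBadSet A' e' B' ∧ B'.card ≤ B.card) :
    mBad A' e' ≤ mBad A e := by
  obtain ⟨B, hB⟩ := hex
  have hne : {n | ∃ B : Finset V, IsBadSet A e B ∧ B.card = n}.Nonempty := ⟨_, B, hB, rfl⟩
  obtain ⟨B₀, hB₀, hcard⟩ := Nat.sInf_mem hne
  unfold mBad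
  obtain ⟨B', hB', hle⟩ := h B₀ hB₀
  calc sInf {n | ∃ B : Finset V', IsBadSet A' e' B ∧ B.card = n} ≤ B'.card :=
        Nat.sInf_le ⟨B', hB', rfl⟩
    _ ≤ _ := hle.trans_eq hcard

theorem badSet_subgraph_general {V : Type} [Fintype V] [DecidableEq V]
    (G : SimpleGraph V) [DecidableRel G.Adj] (e : V → ℤ)
    (htree : G.IsTree) (hneg : NegDefZ (imatZ G.Adj e))
    (S : Finset V)
    (B : Finset V) (hB : IsBadSet G.Adj e B) :
    IsBadSet (fun a b : {v // v ∈ S} => G.Adj a b) (fun a => e a) (B.subtype (· ∈ S)) ∧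
    mBad (fun a b : {v // v ∈ S} => G.Adj a b) (fun a => e a) ≤ mBad G.Adj e := by
  have hG := htree.connected.preconnected
  refine ⟨hB.subtype hG hneg S, mBad_le_of_forall_isBadSet ⟨B, hB⟩ fun B' hB' => ?_⟩
  exact ⟨_, hB'.subtype hG hneg S, (Finset.card_subtype _ _).trans_le (Finset.card_filter_le _ _)⟩

/-- Lemma 2.1: if `B` is a set of bad vertices of `Γ` and `Γ'` is a
connected full subgraph, then `B ∩ V(Γ')` is a set of bad vertices of `Γ'`;
in particular `m(Γ') ≤ m(Γ)`. -/
theorem badSet_subgraph {V : Type} [Fintype V] [DecidableEq V]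
    (G : SimpleGraph V) [DecidableRel G.Adj] (e : V → ℤ)
    (htree : G.IsTree) (hneg : NegDefZ (imatZ G.Adj e))
    (S : Finset V) (hS : S.Nonempty)
    (hconn : (G.induce (↑S : Set V)).Connected)
    (B : Finset V) (hB : IsBadSet G.Adj e B) :
    IsBadSet (fun a b : {v // v ∈ S} => G.Adj a b) (fun a => e a) (B.subtype (· ∈ S)) ∧
    mBad (fun a b : {v // v ∈ S} => G.Adj a b) (fun a => e a) ≤ mBad G.Adj e :=
  badSet_subgraph_general G e htree hneg S B hB
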